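/- Let f be a holomorphic generator on 𝔻 with Denjoy–Wolff point a = 0, i.e. f(z) = z·p(z) with p holomorphic and Re p ≥ 0 on 𝔻, and let ζ_1, …, ζ_N (N ≥ 1) be pairwise distinct boundary regular null points of f with f'(ζ_n) = ∠lim_{z→ζ_n} f(z)/(z − ζ_n) < 0 real (then necessarily f'(0) = p(0) satisfies Re f'(0) > 0). Then Σ_{n=1}^{N} 1/|f'(ζ_n)| ≤ 2·Re(1/f'(0)), and equality holds if and only if there is a real constant c such that 1/f(z) = Σ_{n=1}^{N} (1/|f'(ζ_n)|)·(1/(2z) − 1/(z − ζ_n)) + i·c/z for all z ∈ 𝔻 \ {0}. -/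

import Mathlib

/-!
Put `q = 1 / p`, holomorphic on the disc with `Re q ≥ 0`. The angular derivative at `ζₙ` gives the
radial limit `(1 - r) q(r ζₙ) → cₙ = 1 / |f'(ζₙ)|`. Julia's lemma for the right half-plane (the
Schwarz–Pick inequality for `q` at `z` and `w = r ζ`, as `r → 1`) says
`Re q ≥ (c / 2) Re ((ζ + z) / (ζ - z))`.
Subtracting `(cₙ / 2) (ζₙ + z) / (ζₙ - z)` keeps `Re ≥ 0` and does not change the radial limits at
the other points, so `g = q - ∑ (cₙ / 2) (ζₙ + z) / (ζₙ - z)` has `Re g ≥ 0`; at `z = 0` this is the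
inequality. Equality means `Re g (0) = 0`, which by the open mapping theorem forces `g ≡ i c`;
dividing by `z` this is the stated formula for `1 / f`.
-/

open Complex Filter Metric Finset

noncomputable section

/-- The Stolz angle at a boundary point `ζ` with opening parameter `M`. -/
def StolzAngle (ζ : ℂ) (M : ℝ) : Set ℂ :=
  {z : ℂ | ‖z‖ < 1 ∧ ‖ζ - z‖ < M * (1 - ‖z‖)}

/-- Angular (nontangential) limit of `h` at `ζ` equals `L`: within every Stolz
angle `S(ζ, M)`, `M > 1`, the function tends to `L`. -/
def AngularLimit (h : ℂ → ℂ) (ζ : ℂ) (L : ℂ) : Prop :=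
  ∀ M : ℝ, 1 < M → Tendsto h (nhdsWithin ζ (StolzAngle ζ M)) (nhds L)

/-- Angular limit of `h` at `ζ` is `∞`: `|h|` tends to `+∞` within every Stolz angle. -/
def AngularLimitInfty (h : ℂ → ℂ) (ζ : ℂ) : Prop :=
  ∀ M : ℝ, 1 < M → Tendsto (fun z => ‖h z‖) (nhdsWithin ζ (StolzAngle ζ M)) atTop

open Topology
open scoped ComplexConjugate

local notation "𝔻" => ball (0 : ℂ) 1

namespace Complex

lemma normSq_one_sub_conj_mul_sub_normSq_sub (a z : ℂ) :
    normSq (1 - conj a * z) - normSq (a - z) = (1 - normSq a) * (1 - normSq z) := by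
  simp only [normSq_apply, sub_re, sub_im, mul_re, mul_im, conj_re, conj_im, one_re, one_im]
  ring

lemma normSq_add_conj_sub_normSq_sub (u v : ℂ) :
    normSq (u + conj v) - normSq (u - v) = 4 * u.re * v.re := by
  simp only [normSq_apply, sub_re, sub_im, add_re, add_im, conj_re, conj_im]
  ring

lemma normSq_lt_one_of_mem_ball {z : ℂ} (hz : z ∈ 𝔻) : normSq z < 1 := by
  rw [normSq_eq_norm_sq]
  nlinarith [mem_ball_zero_iff.mp hz, norm_nonneg z]

lemma one_sub_conj_mul_ne_zero {a z : ℂ} (ha : a ∈ 𝔻) (hz : z ∈ 𝔻) : 1 - conj a * z ≠ 0 := by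
  have hlt : ‖conj a * z‖ < 1 := by
    rw [norm_mul, norm_conj]
    exact mul_lt_one_of_nonneg_of_lt_one_left (norm_nonneg a) (mem_ball_zero_iff.mp ha)
      (mem_ball_zero_iff.mp hz).le
  intro h
  rw [← sub_eq_zero.mp h, norm_one] at hlt
  exact lt_irrefl 1 hlt

/-- The involutive automorphism of the unit disc exchanging `a` and `0`. -/
def diskMobius (a z : ℂ) : ℂ := (a - z) / (1 - conj a * z)

lemma diskMobius_mem_ball {a z : ℂ} (ha : a ∈ 𝔻) (hz : z ∈ 𝔻) : diskMobius a z ∈ 𝔻 := by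
  have hd := one_sub_conj_mul_ne_zero ha hz
  have hlt : normSq (a - z) < normSq (1 - conj a * z) := by
    have := normSq_one_sub_conj_mul_sub_normSq_sub a z
    nlinarith [mul_pos (sub_pos.mpr (normSq_lt_one_of_mem_ball ha))
      (sub_pos.mpr (normSq_lt_one_of_mem_ball hz))]
  rw [mem_ball_zero_iff, diskMobius, norm_div, div_lt_one (norm_pos_iff.mpr hd),
    ← sq_lt_sq₀ (norm_nonneg _) (norm_nonneg _), ← normSq_eq_norm_sq, ← normSq_eq_norm_sq]
  exact hlt

@[simp] lemma diskMobius_zero (a : ℂ) : diskMobius a 0 = a := by simp [diskMobius]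

lemma diskMobius_diskMobius {a z : ℂ} (ha : a ∈ 𝔻) (hz : z ∈ 𝔻) :
    diskMobius a (diskMobius a z) = z := by
  have h₁ := one_sub_conj_mul_ne_zero ha hz
  have h₂ := one_sub_conj_mul_ne_zero ha ha
  have hnum : a - diskMobius a z = z * (1 - conj a * a) / (1 - conj a * z) := by
    rw [diskMobius, eq_div_iff h₁, sub_mul, div_mul_cancel₀ _ h₁]; ring
  have hden : 1 - conj a * diskMobius a z = (1 - conj a * a) / (1 - conj a * z) := by
    rw [diskMobius, eq_div_iff h₁, sub_mul, mul_assoc, div_mul_cancel₀ _ h₁]; ring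
  rw [diskMobius, hnum, hden, div_div_div_cancel_right₀ h₁, mul_div_cancel_right₀ _ h₂]

lemma differentiableOn_diskMobius {a : ℂ} (ha : a ∈ 𝔻) :
    DifferentiableOn ℂ (diskMobius a) 𝔻 :=
  DifferentiableOn.div (by fun_prop) (by fun_prop) fun _ hz => one_sub_conj_mul_ne_zero ha hz

/-- A Möbius map from the right half-plane onto the unit disc sending `v` to `0`. -/
def halfPlaneMobius (v u : ℂ) : ℂ := (u - v) / (u + conj v)

lemma add_conj_ne_zero {u v : ℂ} (hu : 0 < u.re) (hv : 0 < v.re) : u + conj v ≠ 0 := by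
  intro h
  have := congrArg re h
  simp only [add_re, conj_re, zero_re] at this
  linarith

lemma halfPlaneMobius_mem_ball {u v : ℂ} (hu : 0 < u.re) (hv : 0 < v.re) :
    halfPlaneMobius v u ∈ 𝔻 := by
  have hlt : normSq (u - v) < normSq (u + conj v) := by
    have := normSq_add_conj_sub_normSq_sub u v
    nlinarith [mul_pos hu hv]
  rw [mem_ball_zero_iff, halfPlaneMobius, norm_div,
    div_lt_one (norm_pos_iff.mpr (add_conj_ne_zero hu hv)),
    ← sq_lt_sq₀ (norm_nonneg _) (norm_nonneg _), ← normSq_eq_norm_sq, ← normSq_eq_norm_sq]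
  exact hlt

lemma norm_halfPlaneMobius_le {q : ℂ → ℂ} (hd : DifferentiableOn ℂ q 𝔻)
    (hq : ∀ x ∈ 𝔻, 0 < (q x).re) {z w : ℂ} (hz : z ∈ 𝔻) (hw : w ∈ 𝔻) :
    ‖halfPlaneMobius (q w) (q z)‖ ≤ ‖diskMobius w z‖ := by
  set ψ : ℂ → ℂ := fun x => halfPlaneMobius (q w) (q (diskMobius w x))
  have hmaps : Set.MapsTo (diskMobius w) 𝔻 𝔻 := fun x hx => diskMobius_mem_ball hw hx
  have hψd : DifferentiableOn ℂ ψ 𝔻 := by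
    have hqm := hd.comp (differentiableOn_diskMobius hw) hmaps
    exact (hqm.sub_const _).div (hqm.add_const _)
      fun x hx => add_conj_ne_zero (hq _ (hmaps hx)) (hq w hw)
  have hψmaps : Set.MapsTo ψ 𝔻 (closedBall 0 1) := fun x hx =>
    ball_subset_closedBall (halfPlaneMobius_mem_ball (hq _ (hmaps hx)) (hq w hw))
  have hψ0 : ψ 0 = 0 := by simp [ψ, halfPlaneMobius]
  have := norm_le_norm_of_mapsTo_ball hψd hψmaps hψ0 (mem_ball_zero_iff.mp (hmaps hz))
  simpa only [ψ, diskMobius_diskMobius hw hz] using this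

lemma schwarzPick_rightHalfPlane {q : ℂ → ℂ} (hd : DifferentiableOn ℂ q 𝔻)
    (hq : ∀ x ∈ 𝔻, 0 < (q x).re) {z w : ℂ} (hz : z ∈ 𝔻) (hw : w ∈ 𝔻) :
    (1 - normSq z) * (1 - normSq w) * normSq (q z + conj (q w))
      ≤ 4 * (q z).re * (q w).re * normSq (1 - conj w * z) := by
  have hB : 0 < normSq (q z + conj (q w)) :=
    normSq_pos.mpr (add_conj_ne_zero (hq z hz) (hq w hw))
  have hD : 0 < normSq (1 - conj w * z) := normSq_pos.mpr (one_sub_conj_mul_ne_zero hw hz)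
  have hsp := pow_le_pow_left₀ (norm_nonneg _) (norm_halfPlaneMobius_le hd hq hz hw) 2
  rw [← normSq_eq_norm_sq, ← normSq_eq_norm_sq, halfPlaneMobius, diskMobius, map_div₀, map_div₀,
    div_le_div_iff₀ hB hD] at hsp
  calc (1 - normSq z) * (1 - normSq w) * normSq (q z + conj (q w))
      = (normSq (1 - conj w * z) - normSq (w - z)) * normSq (q z + conj (q w)) := by
        rw [normSq_one_sub_conj_mul_sub_normSq_sub]; ring
    _ ≤ (normSq (q z + conj (q w)) - normSq (q z - q w)) * normSq (1 - conj w * z) := by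
        linarith
    _ = 4 * (q z).re * (q w).re * normSq (1 - conj w * z) := by
        rw [normSq_add_conj_sub_normSq_sub]

end Complex

namespace Complex

lemma eqOn_of_re_eq_zero {q : ℂ → ℂ} (hd : DifferentiableOn ℂ q 𝔻)
    (hre : ∀ x ∈ 𝔻, 0 ≤ (q x).re) {z₀ : ℂ} (hz₀ : z₀ ∈ 𝔻) (h₀ : (q z₀).re = 0) :
    ∀ z ∈ 𝔻, q z = q z₀ := by
  rcases (hd.analyticOnNhd isOpen_ball).is_constant_or_isOpen (convex_ball 0 1).isPreconnected
    with ⟨v, hv⟩ | hopen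
  · intro z hz
    rw [hv z hz, hv z₀ hz₀]
  · have hsub : q '' 𝔻 ⊆ {w : ℂ | 0 < w.re} := by
      rw [← interior_setOfPred_le_re, (hopen _ subset_rfl isOpen_ball).subset_interior_iff]
      rintro _ ⟨x, hx, rfl⟩
      exact hre x hx
    exact absurd (hsub ⟨z₀, hz₀, rfl⟩) (by simp [h₀])

lemma ofReal_mul_mem_ball {ζ : ℂ} (hζ : ‖ζ‖ = 1) {r : ℝ} (hr : r ∈ Set.Ioo 0 1) :
    (r : ℂ) * ζ ∈ 𝔻 := by
  rw [mem_ball_zero_iff, norm_mul, hζ, mul_one, norm_real, Real.norm_of_nonneg hr.1.le]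
  exact hr.2

lemma normSq_sub_eq_normSq_one_sub_conj_mul {ζ : ℂ} (hζ : ‖ζ‖ = 1) (z : ℂ) :
    normSq (ζ - z) = normSq (1 - conj ζ * z) := by
  have h : normSq ζ = 1 := by rw [normSq_eq_norm_sq, hζ, one_pow]
  have : ζ - z = ζ * (1 - conj ζ * z) := by
    rw [mul_sub, mul_one, ← mul_assoc, mul_conj, h, ofReal_one, one_mul]
  rw [this, normSq_mul, h, one_mul]

lemma julia_of_re_pos {q : ℂ → ℂ} (hd : DifferentiableOn ℂ q 𝔻) (hq : ∀ x ∈ 𝔻, 0 < (q x).re)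
    {ζ : ℂ} (hζ : ‖ζ‖ = 1) {c : ℝ}
    (hc : Tendsto (fun r : ℝ => (1 - (r : ℂ)) * q (r * ζ)) (𝓝[<] 1) (𝓝 c))
    {z : ℂ} (hz : z ∈ 𝔻) :
    (1 - normSq z) * 2 * (c * c) ≤ 4 * (q z).re * c * normSq (ζ - z) := by
  set A : ℝ → ℂ := fun r => (1 - (r : ℂ)) * q (r * ζ)
  set Φ : ℝ × ℂ → ℝ := fun x => (1 - normSq z) * (1 + x.1) * normSq ((1 - x.1) * q z + conj x.2)
  set Ψ : ℝ × ℂ → ℝ := fun x => 4 * (q z).re * x.2.re * normSq (1 - x.1 * conj ζ * z)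
  have hev : ∀ᶠ r in 𝓝[<] (1 : ℝ), Φ (r, A r) ≤ Ψ (r, A r) := by
    -- Schwarz–Pick at `w = r ζ`, multiplied by `1 - r`.
    filter_upwards [Ioo_mem_nhdsLT (zero_lt_one' ℝ)] with r hr
    have hw := ofReal_mul_mem_ball hζ hr
    have hsp := schwarzPick_rightHalfPlane hd hq hz hw
    have hs : (1 - (r : ℂ)) = ((1 - r : ℝ) : ℂ) := by push_cast; ring
    have hnw : normSq ((r : ℂ) * ζ) = r ^ 2 := by
      rw [normSq_mul, normSq_ofReal, normSq_eq_norm_sq, hζ]; ring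
    calc Φ (r, A r)
        = (1 - r) * ((1 - normSq z) * (1 - normSq ((r : ℂ) * ζ))
            * normSq (q z + conj (q (r * ζ)))) := by
          simp only [Φ, A, hs, map_mul, conj_ofReal, ← mul_add, normSq_ofReal, hnw]
          ring
      _ ≤ (1 - r) * (4 * (q z).re * (q (r * ζ)).re * normSq (1 - conj ((r : ℂ) * ζ) * z)) :=
          mul_le_mul_of_nonneg_left hsp (by linarith [hr.2])
      _ = Ψ (r, A r) := by
          simp only [Ψ, A, hs, re_ofReal_mul, map_mul, conj_ofReal]
          ring_nf
  have hlim : Tendsto (fun r : ℝ => (r, A r)) (𝓝[<] 1) (𝓝 (1, (c : ℂ))) :=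
    (tendsto_id.mono_left nhdsWithin_le_nhds).prodMk_nhds hc
  have hΦ : Continuous Φ := by fun_prop
  have hΨ : Continuous Ψ := by fun_prop
  have := le_of_tendsto_of_tendsto ((hΦ.tendsto _).comp hlim) ((hΨ.tendsto _).comp hlim) hev
  simpa [Φ, Ψ, normSq_sub_eq_normSq_one_sub_conj_mul hζ, one_add_one_eq_two] using this

lemma sub_ne_zero_of_norm_eq_one {ζ z : ℂ} (hζ : ‖ζ‖ = 1) (hz : z ∈ 𝔻) : ζ - z ≠ 0 := by
  rw [sub_ne_zero]
  rintro rfl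
  exact (mem_ball_zero_iff.mp hz).ne hζ

lemma re_herglotzRieszKernel_zero {ζ : ℂ} (hζ : ‖ζ‖ = 1) (z : ℂ) :
    (herglotzRieszKernel 0 z ζ).re = (1 - normSq z) / normSq (ζ - z) := by
  rw [← Function.comp_apply (f := re), ← poissonKernel_eq_re_herglotzRieszKernel, poissonKernel]
  simp [hζ, normSq_eq_norm_sq]

lemma differentiableOn_herglotzRieszKernel {ζ : ℂ} (hζ : ‖ζ‖ = 1) :
    DifferentiableOn ℂ (fun z => herglotzRieszKernel 0 z ζ) 𝔻 := by
  simp only [herglotzRieszKernel, sub_zero]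
  exact DifferentiableOn.div (by fun_prop) (by fun_prop)
    fun z hz => sub_ne_zero_of_norm_eq_one hζ hz

lemma tendsto_one_sub_mul_herglotzRieszKernel {ζ ζ' : ℂ} (hne : ζ' ≠ ζ) :
    Tendsto (fun r : ℝ => (1 - (r : ℂ)) * herglotzRieszKernel 0 (r * ζ) ζ') (𝓝[<] 1) (𝓝 0) := by
  have hcont : ContinuousAt (fun r : ℝ => (1 - (r : ℂ)) * herglotzRieszKernel 0 (r * ζ) ζ') 1 := by
    simp only [herglotzRieszKernel, sub_zero]
    fun_prop (disch := simpa [sub_eq_zero] using hne)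
  simpa using hcont.tendsto.mono_left nhdsWithin_le_nhds

lemma julia {q : ℂ → ℂ} (hd : DifferentiableOn ℂ q 𝔻) (hre : ∀ x ∈ 𝔻, 0 ≤ (q x).re)
    {ζ : ℂ} (hζ : ‖ζ‖ = 1) {c : ℝ}
    (hc : Tendsto (fun r : ℝ => (1 - (r : ℂ)) * q (r * ζ)) (𝓝[<] 1) (𝓝 c))
    {z : ℂ} (hz : z ∈ 𝔻) :
    c / 2 * (herglotzRieszKernel 0 z ζ).re ≤ (q z).re := by
  have hN := normSq_pos.mpr (sub_ne_zero_of_norm_eq_one hζ hz)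
  rw [re_herglotzRieszKernel_zero hζ, ← mul_div_assoc, div_le_iff₀ hN]
  rcases le_or_gt c 0 with hc₀ | hc₀
  · nlinarith [normSq_lt_one_of_mem_ball hz, hre z hz]
  by_cases hpos : ∀ x ∈ 𝔻, 0 < (q x).re
  · nlinarith [julia_of_re_pos hd hpos hζ hc hz]
  push Not at hpos
  obtain ⟨x₀, hx₀, hx₀re⟩ := hpos
  have hconst := eqOn_of_re_eq_zero hd hre hx₀ (le_antisymm hx₀re (hre x₀ hx₀))
  have h₀ : Tendsto (fun r : ℝ => (1 - (r : ℂ)) * q (r * ζ)) (𝓝[<] 1) (𝓝 0) := by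
    have : Tendsto (fun r : ℝ => (1 - (r : ℂ)) * q x₀) (𝓝[<] 1) (𝓝 0) := by
      simpa using ((by fun_prop : Continuous fun r : ℝ => (1 - (r : ℂ)) * q x₀).tendsto 1).mono_left
        nhdsWithin_le_nhds
    refine this.congr' ?_
    filter_upwards [Ioo_mem_nhdsLT (zero_lt_one' ℝ)] with r hr
    rw [hconst _ (ofReal_mul_mem_ball hζ hr)]
  exact absurd (ofReal_eq_zero.mp (tendsto_nhds_unique hc h₀)) hc₀.ne'

lemma sum_julia {ι : Type*} (s : Finset ι) {ζ : ι → ℂ} (hζ : ∀ n ∈ s, ‖ζ n‖ = 1)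
    (hinj : Set.InjOn ζ s) {c : ι → ℝ} {q : ℂ → ℂ} (hd : DifferentiableOn ℂ q 𝔻)
    (hre : ∀ x ∈ 𝔻, 0 ≤ (q x).re)
    (hc : ∀ n ∈ s, Tendsto (fun r : ℝ => (1 - (r : ℂ)) * q (r * ζ n)) (𝓝[<] 1) (𝓝 (c n)))
    {z : ℂ} (hz : z ∈ 𝔻) :
    ∑ n ∈ s, c n / 2 * (herglotzRieszKernel 0 z (ζ n)).re ≤ (q z).re := by
  classical
  induction s using Finset.induction_on generalizing q with
  | empty => simpa using hre z hz
  | @insert a s ha ih =>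
    have hζa := hζ a (mem_insert_self a s)
    set q₁ : ℂ → ℂ := fun x => q x - ((c a / 2 : ℝ) : ℂ) * herglotzRieszKernel 0 x (ζ a)
    have hq₁ : DifferentiableOn ℂ q₁ 𝔻 :=
      hd.sub ((differentiableOn_herglotzRieszKernel hζa).const_mul _)
    have hq₁re : ∀ x ∈ 𝔻, 0 ≤ (q₁ x).re := fun x hx => by
      simpa [q₁, re_ofReal_mul] using julia hd hre hζa (hc a (mem_insert_self a s)) hx
    have hq₁c : ∀ n ∈ s,
        Tendsto (fun r : ℝ => (1 - (r : ℂ)) * q₁ (r * ζ n)) (𝓝[<] 1) (𝓝 (c n)) := by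
      intro n hn
      have hne : ζ a ≠ ζ n := hinj.ne (by simp) (by simp [hn]) (ne_of_mem_of_not_mem hn ha).symm
      have := (hc n (mem_insert_of_mem hn)).sub
        ((tendsto_one_sub_mul_herglotzRieszKernel hne).const_mul ((c a / 2 : ℝ) : ℂ))
      simpa [q₁, mul_sub, mul_left_comm] using this
    have := ih (fun n hn => hζ n (mem_insert_of_mem hn))
      (hinj.mono (by simp [Set.subset_insert])) hq₁ hq₁re hq₁c
    rw [sum_insert ha]
    simp only [q₁, sub_re, re_ofReal_mul] at this
    linarith

end Complex

namespace Complex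

lemma herglotzRieszKernel_zero_zero {ζ : ℂ} (hζ : ζ ≠ 0) : herglotzRieszKernel 0 0 ζ = 1 := by
  simp [herglotzRieszKernel, hζ]

lemma herglotzRieszKernel_div_two_mul {ζ z : ℂ} (hz : z ≠ 0) (hζz : ζ - z ≠ 0) :
    herglotzRieszKernel 0 z ζ / (2 * z) = 1 / (2 * z) - 1 / (z - ζ) := by
  have hzζ : z - ζ ≠ 0 := by rwa [← neg_sub, neg_ne_zero]
  simp only [herglotzRieszKernel, sub_zero]
  field_simp
  ring

lemma re_eq_zero_iff_exists_eq_I_mul {g : ℂ → ℂ} (hg : DifferentiableOn ℂ g 𝔻)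
    (hre : ∀ z ∈ 𝔻, 0 ≤ (g z).re) :
    (g 0).re = 0 ↔ ∃ c : ℝ, ∀ z ∈ 𝔻, z ≠ 0 → g z = I * c := by
  have h0 : (0 : ℂ) ∈ 𝔻 := mem_ball_self one_pos
  constructor
  · intro hg0
    refine ⟨(g 0).im, fun z hz _ => ?_⟩
    rw [eqOn_of_re_eq_zero hg hre h0 hg0 z hz]
    apply ext <;> simp [hg0]
  · rintro ⟨c, hc⟩
    have hcont : ContinuousAt g 0 := hg.continuousOn.continuousAt (ball_mem_nhds 0 one_pos)
    have : g 0 = I * c := by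
      refine tendsto_nhds_unique (hcont.tendsto.mono_left (nhdsWithin_le_nhds (s := {0}ᶜ)))
        (tendsto_const_nhds.congr' ?_)
      filter_upwards [self_mem_nhdsWithin, nhdsWithin_le_nhds (ball_mem_nhds 0 one_pos)]
        with z hz0 hz
      exact (hc z hz hz0).symm
    simp [this]

end Complex

open Complex

lemma tendsto_ofReal_mul_stolzAngle {ζ : ℂ} (hζ : ‖ζ‖ = 1) {M : ℝ} (hM : 1 < M) :
    Tendsto (fun r : ℝ => (r : ℂ) * ζ) (𝓝[<] 1) (𝓝[StolzAngle ζ M] ζ) := by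
  refine tendsto_nhdsWithin_iff.mpr ⟨?_, ?_⟩
  · simpa using ((by fun_prop : Continuous fun r : ℝ => (r : ℂ) * ζ).tendsto 1).mono_left
      nhdsWithin_le_nhds
  · filter_upwards [Ioo_mem_nhdsLT (zero_lt_one' ℝ)] with r hr
    have hnorm : ‖(r : ℂ) * ζ‖ = r := by
      rw [norm_mul, hζ, mul_one, norm_real, Real.norm_of_nonneg hr.1.le]
    have hdist : ‖ζ - r * ζ‖ = 1 - r := by
      rw [← one_sub_mul, ← ofReal_one, ← ofReal_sub, norm_mul, hζ, mul_one, norm_real,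
        Real.norm_of_nonneg (by linarith [hr.2])]
    refine ⟨hnorm.trans_lt hr.2, ?_⟩
    rw [hnorm, hdist]
    nlinarith [hr.2]

lemma tendsto_one_sub_mul_one_div_of_angularLimit {p : ℂ → ℂ} {ζ m : ℂ} (hζ : ‖ζ‖ = 1)
    (hm : m ≠ 0) (h : AngularLimit (fun z => z * p z / (z - ζ)) ζ m) :
    Tendsto (fun r : ℝ => (1 - (r : ℂ)) * (1 / p (r * ζ))) (𝓝[<] 1) (𝓝 (-1 / m)) := by
  have hquot := (h 2 one_lt_two).comp (tendsto_ofReal_mul_stolzAngle hζ one_lt_two)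
  have hneg : Tendsto (fun r : ℝ => -(r : ℂ)) (𝓝[<] 1) (𝓝 (-1)) := by
    simpa using ((by fun_prop : Continuous fun r : ℝ => -(r : ℂ)).tendsto 1).mono_left
      nhdsWithin_le_nhds
  refine (hneg.div hquot hm).congr' ?_
  filter_upwards [Ioo_mem_nhdsLT (zero_lt_one' ℝ)] with r hr
  have hrζ : (r : ℂ) * ζ ≠ 0 :=
    mul_ne_zero (ofReal_ne_zero.mpr hr.1.ne') (norm_ne_zero_iff.mp (hζ ▸ one_ne_zero))
  simp only [Pi.div_apply, Function.comp_apply]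
  rw [div_div_eq_mul_div, show -(r : ℂ) * (r * ζ - ζ) = (1 - r) * (r * ζ) by ring, mul_div_assoc,
    div_mul_cancel_left₀ hrζ, one_div]

/-- If `p` vanishes somewhere in the disc it vanishes identically, and then `1 / p = 0`. -/
lemma differentiableOn_one_div_of_re_nonneg {p : ℂ → ℂ} (hp : DifferentiableOn ℂ p 𝔻)
    (hre : ∀ z ∈ 𝔻, 0 ≤ (p z).re) : DifferentiableOn ℂ (fun z => 1 / p z) 𝔻 := by
  by_cases h : ∃ z₀ ∈ 𝔻, p z₀ = 0
  · obtain ⟨z₀, hz₀, h₀⟩ := h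
    have hconst := eqOn_of_re_eq_zero hp hre hz₀ (by simp [h₀])
    refine (differentiableOn_const (0 : ℂ)).congr fun z hz => ?_
    simp [hconst z hz, h₀]
  · push Not at h
    exact (differentiableOn_const 1).div hp h

lemma one_div_mul_eq_sum_add_iff {ι : Type*} [Fintype ι] {z P : ℂ} (hz : z ≠ 0) {ζ : ι → ℂ}
    (hζz : ∀ n, ζ n - z ≠ 0) (a : ι → ℝ) (c : ℝ) :
    1 / (z * P) = (∑ n, (1 / (a n : ℂ)) * (1 / (2 * z) - 1 / (z - ζ n))) + I * c / z ↔
      1 / P - ∑ n, ((1 / a n / 2 : ℝ) : ℂ) * herglotzRieszKernel 0 z (ζ n) = I * c := by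
  have hsum : ∑ n, (1 / (a n : ℂ)) * (1 / (2 * z) - 1 / (z - ζ n))
      = z⁻¹ * ∑ n, ((1 / a n / 2 : ℝ) : ℂ) * herglotzRieszKernel 0 z (ζ n) := by
    rw [mul_sum]
    refine sum_congr rfl fun n _ => ?_
    rw [← herglotzRieszKernel_div_two_mul hz (hζz n)]
    push_cast
    field_simp
  rw [hsum, div_eq_inv_mul _ z, ← mul_add, one_div (z * P), mul_inv,
    mul_right_inj' (inv_ne_zero hz), one_div P, sub_eq_iff_eq_add']

theorem stmt8_general (N : ℕ) (p f : ℂ → ℂ)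
    (hp : DifferentiableOn ℂ p (ball (0:ℂ) 1))
    (hre : ∀ z ∈ ball (0:ℂ) 1, 0 ≤ (p z).re)
    (hf : ∀ z, f z = z * p z)
    (ζ : Fin N → ℂ) (hinj : Function.Injective ζ)
    (hζ : ∀ n, ‖ζ n‖ = 1)
    (m : Fin N → ℝ) (hm : ∀ n, m n < 0)
    (hder : ∀ n, AngularLimit (fun z => f z / (z - ζ n)) (ζ n) ((m n : ℝ) : ℂ)) :
    (∑ n, 1 / |m n|) ≤ 2 * (1 / p 0).re ∧
    ((∑ n, 1 / |m n|) = 2 * (1 / p 0).re ↔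
      ∃ c : ℝ, ∀ z ∈ ball (0:ℂ) 1, z ≠ 0 →
        1 / f z =
          (∑ n, (1 / ((|m n| : ℝ) : ℂ)) * (1 / (2 * z) - 1 / (z - ζ n)))
            + Complex.I * (c : ℂ) / z) := by
  obtain rfl : f = fun z => z * p z := funext hf
  set g : ℂ → ℂ := fun z =>
    1 / p z - ∑ n, ((1 / |m n| / 2 : ℝ) : ℂ) * herglotzRieszKernel 0 z (ζ n)
  have hq := differentiableOn_one_div_of_re_nonneg hp hre
  have hqre : ∀ z ∈ 𝔻, 0 ≤ (1 / p z).re := fun z hz => by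
    simpa using div_nonneg (hre z hz) (normSq_nonneg (p z))
  have hrad (n : Fin N) : Tendsto (fun r : ℝ => (1 - (r : ℂ)) * (1 / p (r * ζ n))) (𝓝[<] 1)
      (𝓝 ((1 / |m n| : ℝ) : ℂ)) := by
    have : ((1 / |m n| : ℝ) : ℂ) = -1 / (m n : ℂ) := by rw [abs_of_neg (hm n)]; push_cast; ring
    rw [this]
    exact tendsto_one_sub_mul_one_div_of_angularLimit (hζ n) (ofReal_ne_zero.mpr (hm n).ne) (hder n)
  have hg : DifferentiableOn ℂ g 𝔻 := hq.sub
    (DifferentiableOn.fun_sum fun n _ => (differentiableOn_herglotzRieszKernel (hζ n)).const_mul _)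
  have hgre (z : ℂ) (hz : z ∈ 𝔻) : 0 ≤ (g z).re := by
    have := sum_julia univ (fun n _ => hζ n) hinj.injOn hq hqre (fun n _ => hrad n) hz
    simp only [g, sub_re, re_sum, re_ofReal_mul]
    linarith
  have hg0 : (g 0).re = (1 / p 0).re - (∑ n, 1 / |m n|) / 2 := by
    have hK (n : Fin N) : herglotzRieszKernel 0 0 (ζ n) = 1 :=
      herglotzRieszKernel_zero_zero (norm_ne_zero_iff.mp (by simp [hζ n]))
    simp only [g, sub_re, re_sum, hK, mul_one, ofReal_re, sum_div]
  refine ⟨by linarith [hgre 0 (mem_ball_self one_pos)], ?_⟩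
  rw [show (∑ n, 1 / |m n|) = 2 * (1 / p 0).re ↔ (g 0).re = 0 by constructor <;> intro <;> linarith,
    re_eq_zero_iff_exists_eq_I_mul hg hgre]
  refine exists_congr fun c => forall₂_congr fun z hz => imp_congr_right fun hz0 => ?_
  exact (one_div_mul_eq_sum_add_iff hz0 (fun n => sub_ne_zero_of_norm_eq_one (hζ n) hz) _ c).symm

/-- Corollary `c.simpler`: the dilation-case inequality
`∑ 1/|f'(ζ_n)| ≤ 2 Re (1/f'(0))` with the extremal case characterized. -/
theorem stmt8 (N : ℕ) (hN : 1 ≤ N) (p f : ℂ → ℂ)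
    (hp : DifferentiableOn ℂ p (ball (0:ℂ) 1))
    (hre : ∀ z ∈ ball (0:ℂ) 1, 0 ≤ (p z).re)
    (hf : ∀ z, f z = z * p z)
    (ζ : Fin N → ℂ) (hinj : Function.Injective ζ)
    (hζ : ∀ n, ‖ζ n‖ = 1)
    (m : Fin N → ℝ) (hm : ∀ n, m n < 0)
    (hder : ∀ n, AngularLimit (fun z => f z / (z - ζ n)) (ζ n) ((m n : ℝ) : ℂ)) :
    (∑ n, 1 / |m n|) ≤ 2 * (1 / p 0).re ∧
    ((∑ n, 1 / |m n|) = 2 * (1 / p 0).re ↔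
      ∃ c : ℝ, ∀ z ∈ ball (0:ℂ) 1, z ≠ 0 →
        1 / f z =
          (∑ n, (1 / ((|m n| : ℝ) : ℂ)) * (1 / (2 * z) - 1 / (z - ζ n)))
            + Complex.I * (c : ℂ) / z) :=
  stmt8_general N p f hp hre hf ζ hinj hζ m hm hder
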